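/- arXiv:2506.10866 — 2 statements merged into one kernel-verified Lean document; each statement's English description precedes it below -/
import Mathlib

section
/- Let A₀, A₁ ∈ ℝ^{n×n}, B₀, B₁ ∈ ℝ^{n×1}, S ∈ ℝ^{ν×ν}, L ∈ ℝ^{1×ν}, and for each degree j ≥ 0 suppose Π_j ∈ ℝ^{n×ν} satisfies the nested Sylvester equations Π₀S = A₀Π₀ + B₀L, Π₁S = A₀Π₁ + A₁Π₀ + B₁L, and Π_jS = A₀Π_j + A₁Π_{j−1} for j ≥ 2. If the series Π(p) = Σ_{j≥0} p^j Π_j converges absolutely (entrywise) at some p ∈ ℝ, then Π(p) satisfies the parametric Sylvester equation (A₀ + pA₁)Π(p) + (B₀ + pB₁)L = Π(p)S. -/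
/-!
Since matrix multiplication is continuous and additive, the series `Π(p) = ∑ pʲ Πⱼ` may be
multiplied termwise by `S`, `A₀` and `A₁`. The nested Sylvester equations say that the `(j+2)`-nd
term of `Π S - A₀ Π` is the `(j+1)`-st term of `p A₁ Π`, so these two series differ only in
their first terms, and those contribute exactly `(B₀ + p B₁) L`.
-/

open Matrix

theorem HasSum.matrix_mul_left {ι l m n R : Type*} [Fintype m] [NonUnitalNonAssocSemiring R]
    [TopologicalSpace R] [IsTopologicalSemiring R] {f : ι → Matrix m n R} {a : Matrix m n R}
    (hf : HasSum f a) (M : Matrix l m R) : HasSum (fun i => M * f i) (M * a) :=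
  hf.map (addMonoidHomMulLeft M) (continuous_const.matrix_mul continuous_id)

theorem HasSum.matrix_mul_right {ι l m n R : Type*} [Fintype m] [NonUnitalNonAssocSemiring R]
    [TopologicalSpace R] [IsTopologicalSemiring R] {f : ι → Matrix l m R} {a : Matrix l m R}
    (hf : HasSum f a) (M : Matrix m n R) : HasSum (fun i => f i * M) (a * M) :=
  hf.map (addMonoidHomMulRight M) (continuous_id.matrix_mul continuous_const)

theorem Matrix.hasSum_of_summable_apply {ι m n R : Type*} [AddCommMonoid R] [TopologicalSpace R]
    {f : ι → Matrix m n R} (hf : ∀ i k, Summable fun j => f j i k) :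
    HasSum f (Matrix.of fun i k => ∑' j, f j i k) :=
  Pi.hasSum.2 fun i => Pi.hasSum.2 fun k => (hf i k).hasSum

theorem HasSum.add_eq_of_add_two_eq_add_one {G : Type*} [AddCommGroup G] [TopologicalSpace G]
    [IsTopologicalAddGroup G] [T2Space G] {f g : ℕ → G} {a b : G} (hf : HasSum f a)
    (hg : HasSum g b) (hfg : ∀ j, f (j + 2) = g (j + 1)) : a + g 0 = f 0 + f 1 + b := by
  have hf_shift : HasSum (fun j => f (j + 2)) (b - g 0) := by
    simpa only [hfg, Finset.sum_range_one] using (hasSum_nat_add_iff' 1).2 hg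
  rw [← hf_shift.sum_range_add.unique hf, Finset.sum_range_succ, Finset.sum_range_one]
  abel

theorem series_solves_parametric_sylvester {n ν : ℕ}
    (A₀ A₁ : Matrix (Fin n) (Fin n) ℝ)
    (B₀ B₁ : Matrix (Fin n) (Fin 1) ℝ)
    (S : Matrix (Fin ν) (Fin ν) ℝ) (L : Matrix (Fin 1) (Fin ν) ℝ)
    (Ps : ℕ → Matrix (Fin n) (Fin ν) ℝ)
    (h0 : Ps 0 * S = A₀ * Ps 0 + B₀ * L)
    (h1 : Ps 1 * S = A₀ * Ps 1 + A₁ * Ps 0 + B₁ * L)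
    (hj : ∀ j, 2 ≤ j → Ps j * S = A₀ * Ps j + A₁ * Ps (j - 1))
    (p : ℝ)
    (hconv : ∀ (i : Fin n) (k : Fin ν), Summable (fun j : ℕ => |p ^ j * Ps j i k|)) :
    (A₀ + p • A₁) * (Matrix.of fun i k => ∑' j : ℕ, p ^ j * Ps j i k) +
      (B₀ + p • B₁) * L =
    (Matrix.of fun i k => ∑' j : ℕ, p ^ j * Ps j i k) * S := by
  set P := Matrix.of fun i k => ∑' j : ℕ, p ^ j * Ps j i k
  have hP : HasSum (fun j => p ^ j • Ps j) P :=
    Matrix.hasSum_of_summable_apply fun i k => summable_abs_iff.mp (hconv i k)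
  have hterm (j : ℕ) : p ^ (j + 2) • Ps (j + 2) * S - A₀ * p ^ (j + 2) • Ps (j + 2) =
      p • A₁ * p ^ (j + 1) • Ps (j + 1) := by
    have hrec : Ps (j + 2) * S - A₀ * Ps (j + 2) = A₁ * Ps (j + 1) :=
      sub_eq_of_eq_add' (hj (j + 2) (by omega))
    simp only [Matrix.smul_mul, Matrix.mul_smul, ← smul_sub, hrec, smul_smul, ← pow_succ]
  have key := ((hP.matrix_mul_right S).sub (hP.matrix_mul_left A₀)).add_eq_of_add_two_eq_add_one
    (hP.matrix_mul_left (p • A₁)) hterm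
  simp only [pow_zero, one_smul, pow_one, h0, h1, Matrix.mul_smul, Matrix.smul_mul] at key
  rw [Matrix.add_mul, Matrix.add_mul, Matrix.smul_mul, Matrix.smul_mul]
  linear_combination (norm := module) -key
end

section
/- Let A ∈ ℝ^{n×n}, B ∈ ℝ^{n×1}, S ∈ ℝ^{ν×ν}, L ∈ ℝ^{1×ν} with ν ≤ n, and let Π ∈ ℝ^{n×ν} have full column rank and solve AΠ + BL = ΠS. Suppose X ∈ ℝ^{n×n} is symmetric positive definite with AᵀX + XA ≺ 0. Define X̃ = ΠᵀXΠ and G = X̃^{−1}ΠᵀXB. Then X̃ is symmetric positive definite and (S − GL)ᵀX̃ + X̃(S − GL) = Πᵀ(AᵀX + XA)Π ⪯ 0 with the inequality strict; hence S − GL is Hurwitz. -/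
/-!
Congruence by the injective `Π` makes `X̃ = ΠᵀXΠ` positive definite. From `AΠ + BL = ΠS` and
`X̃G = ΠᵀXB` one gets `X̃(S - GL) = ΠᵀXAΠ`; adding its transpose, the reduced Lyapunov matrix is
the congruence of `AᵀX + XA` by `Π`, hence negative definite. If `Nv = μv` with `v ≠ 0`, then
`v*(NᴴX̃ + X̃N)v = 2 Re μ · v*X̃v` with `v*X̃v > 0`, so `Re μ < 0`; the real positive definite
matrices involved stay positive definite over `ℂ`, being of the form `BᵀB` with `B` nonsingular.
-/

open Matrix

/-- A real square matrix is Hurwitz if every (complex) eigenvalue has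
strictly negative real part. -/
def Hurwitz {n : ℕ} (A : Matrix (Fin n) (Fin n) ℝ) : Prop :=
  ∀ μ ∈ spectrum ℂ (A.map (fun x => (x : ℂ))), μ.re < 0

open scoped ComplexOrder

namespace Matrix

variable {m n 𝕜 : Type*} [Fintype n]

theorem mulVec_injective_of_rank_eq_card {K : Type*} [Field K] {P : Matrix m n K}
    (hP : P.rank = Fintype.card n) : Function.Injective P.mulVec := by
  rw [mulVec_injective_iff, linearIndependent_iff_card_eq_finrank_span, Set.finrank,
    ← rank_eq_finrank_span_cols, hP]

theorem PosDef.map_ofReal [RCLike 𝕜] {M : Matrix n n ℝ} (hM : M.PosDef) :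
    (M.map ((↑) : ℝ → 𝕜)).PosDef := by
  classical
  open scoped MatrixOrder in
  obtain ⟨B, rfl⟩ := CStarAlgebra.nonneg_iff_eq_star_mul_self.mp hM.posSemidef.nonneg
  have hmap :
      (star B * B).map ((↑) : ℝ → 𝕜) = (B.map ((↑) : ℝ → 𝕜))ᴴ * B.map ((↑) : ℝ → 𝕜) := by
    rw [← conjTranspose_map _ (fun x => by simp [RCLike.star_def]), ← Matrix.map_mul,
      star_eq_conjTranspose]
  rw [hmap, (posSemidef_conjTranspose_mul_self _).posDef_iff_det_ne_zero, ← hmap]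
  change ((algebraMap ℝ 𝕜).mapMatrix (star B * B)).det ≠ 0
  rw [← RingHom.map_det, map_ne_zero]
  exact hM.det_pos.ne'

theorem re_lt_zero_of_mem_spectrum_of_lyapunov [RCLike 𝕜] [DecidableEq n]
    {N X : Matrix n n 𝕜} (hX : X.PosDef) (hQ : (-(Nᴴ * X + X * N)).PosDef) {μ : 𝕜}
    (hμ : μ ∈ spectrum 𝕜 N) : RCLike.re μ < 0 := by
  rw [← spectrum_toLin'] at hμ
  obtain ⟨v, hv⟩ := (Module.End.hasEigenvalue_iff_mem_spectrum.mpr hμ).exists_hasEigenvector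
  have hNv : N *ᵥ v = μ • v := hv.apply_eq_smul
  set p := star v ⬝ᵥ (X *ᵥ v)
  have hp : 0 < p := hX.dotProduct_mulVec_pos hv.2
  have hquad : star v ⬝ᵥ ((-(Nᴴ * X + X * N)) *ᵥ v) = -((2 * RCLike.re μ : ℝ) : 𝕜) * p := by
    have hleft : star v ⬝ᵥ (Nᴴ *ᵥ (X *ᵥ v)) = star μ * p := by
      rw [dotProduct_mulVec, ← star_mulVec, hNv, star_smul, smul_dotProduct, smul_eq_mul]
    have hright : star v ⬝ᵥ (X *ᵥ (N *ᵥ v)) = μ * p := by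
      rw [hNv, mulVec_smul, dotProduct_smul, smul_eq_mul]
    rw [neg_mulVec, add_mulVec, ← mulVec_mulVec, ← mulVec_mulVec, dotProduct_neg, dotProduct_add,
      hleft, hright, ← add_mul, RCLike.star_def, add_comm, RCLike.add_conj]
    push_cast
    ring
  have hQv := hQ.dotProduct_mulVec_pos hv.2
  rw [hquad] at hQv
  have hre := (RCLike.pos_iff.mp hQv).1
  rw [neg_mul, map_neg, RCLike.re_ofReal_mul] at hre
  nlinarith [(RCLike.pos_iff.mp hp).1]

end Matrix

section ReducedOrder

variable {R n ν ι : Type*} [CommRing R] [Fintype n] [Fintype ν] [Fintype ι]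
  {A X : Matrix n n R} {B : Matrix n ι R} {S K : Matrix ν ν R} {L : Matrix ι ν R}
  {P : Matrix n ν R} {G : Matrix ν ι R}

theorem mul_sub_mul_eq_of_sylvester (hsylv : A * P + B * L = P * S) (hK : K = Pᵀ * X * P)
    (hKG : K * G = Pᵀ * X * B) : K * (S - G * L) = Pᵀ * X * A * P := by
  rw [Matrix.mul_sub, ← Matrix.mul_assoc, hKG, hK, Matrix.mul_assoc _ P, Matrix.mul_assoc _ B,
    ← Matrix.mul_sub, ← hsylv, add_sub_cancel_right, Matrix.mul_assoc _ A]

theorem transpose_mul_add_mul_eq_of_mul_eq {M : Matrix ν ν R} (hK : Kᵀ = K) (hX : Xᵀ = X)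
    (h : K * M = Pᵀ * X * A * P) : Mᵀ * K + K * M = Pᵀ * (Aᵀ * X + X * A) * P := by
  have hMK : Mᵀ * K = Pᵀ * Aᵀ * X * P := by
    rw [← hK, ← transpose_mul, h]
    simp only [transpose_mul, transpose_transpose, hX, Matrix.mul_assoc]
  rw [hMK, h]
  simp only [Matrix.mul_add, Matrix.add_mul, Matrix.mul_assoc]

end ReducedOrder

theorem hurwitz_of_lyapunov {k : ℕ} {N X : Matrix (Fin k) (Fin k) ℝ} (hX : X.PosDef)
    (hQ : (-(Nᵀ * X + X * N)).PosDef) : Hurwitz N := by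
  intro μ hμ
  refine re_lt_zero_of_mem_spectrum_of_lyapunov (hX.map_ofReal (𝕜 := ℂ)) ?_ hμ
  have hQc := hQ.map_ofReal (𝕜 := ℂ)
  change (Complex.ofRealHom.mapMatrix _).PosDef at hQc
  rwa [map_neg, map_add, map_mul, map_mul, RingHom.mapMatrix_apply, RingHom.mapMatrix_apply,
    RingHom.mapMatrix_apply, ← conjTranspose_eq_transpose_of_trivial,
    conjTranspose_map _ (fun x => by simp)] at hQc

theorem reduced_order_lyapunov_general {n ν : ℕ}
    (A : Matrix (Fin n) (Fin n) ℝ) (B : Matrix (Fin n) (Fin 1) ℝ)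
    (S : Matrix (Fin ν) (Fin ν) ℝ) (L : Matrix (Fin 1) (Fin ν) ℝ)
    (P : Matrix (Fin n) (Fin ν) ℝ) (hrank : P.rank = ν)
    (hsylv : A * P + B * L = P * S)
    (X : Matrix (Fin n) (Fin n) ℝ) (hX : X.PosDef)
    (hlyap : (-(Aᵀ * X + X * A)).PosDef)
    (Xt : Matrix (Fin ν) (Fin ν) ℝ) (hXt : Xt = Pᵀ * X * P)
    (G : Matrix (Fin ν) (Fin 1) ℝ) (hG : G = Xt⁻¹ * (Pᵀ * X * B)) :
    Xt.PosDef ∧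
    (S - G * L)ᵀ * Xt + Xt * (S - G * L) = Pᵀ * (Aᵀ * X + X * A) * P ∧
    (-((S - G * L)ᵀ * Xt + Xt * (S - G * L))).PosDef ∧
    Hurwitz (S - G * L) := by
  have hP : Function.Injective P.mulVec :=
    Matrix.mulVec_injective_of_rank_eq_card (by rw [hrank, Fintype.card_fin])
  have hXtpd : Xt.PosDef := by simpa [hXt] using hX.conjTranspose_mul_mul_same hP
  have hXtG : Xt * G = Pᵀ * X * B := by
    rw [hG, ← Matrix.mul_assoc, Matrix.mul_nonsing_inv _ hXtpd.det_pos.ne'.isUnit, Matrix.one_mul]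
  have hid := transpose_mul_add_mul_eq_of_mul_eq (isHermitian_iff_isSymm.mp hXtpd.1)
    (isHermitian_iff_isSymm.mp hX.1) (mul_sub_mul_eq_of_sylvester hsylv hXt hXtG)
  have hneg : (-((S - G * L)ᵀ * Xt + Xt * (S - G * L))).PosDef := by
    rw [hid, ← Matrix.neg_mul, ← Matrix.mul_neg]
    simpa only [conjTranspose_eq_transpose_of_trivial] using hlyap.conjTranspose_mul_mul_same hP
  exact ⟨hXtpd, hid, hneg, hurwitz_of_lyapunov hXtpd hneg⟩

theorem reduced_order_lyapunov {n ν : ℕ} (hn : ν ≤ n)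
    (A : Matrix (Fin n) (Fin n) ℝ) (B : Matrix (Fin n) (Fin 1) ℝ)
    (S : Matrix (Fin ν) (Fin ν) ℝ) (L : Matrix (Fin 1) (Fin ν) ℝ)
    (P : Matrix (Fin n) (Fin ν) ℝ) (hrank : P.rank = ν)
    (hsylv : A * P + B * L = P * S)
    (X : Matrix (Fin n) (Fin n) ℝ) (hX : X.PosDef)
    (hlyap : (-(Aᵀ * X + X * A)).PosDef)
    (Xt : Matrix (Fin ν) (Fin ν) ℝ) (hXt : Xt = Pᵀ * X * P)
    (G : Matrix (Fin ν) (Fin 1) ℝ) (hG : G = Xt⁻¹ * (Pᵀ * X * B)) :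
    Xt.PosDef ∧
    (S - G * L)ᵀ * Xt + Xt * (S - G * L) = Pᵀ * (Aᵀ * X + X * A) * P ∧
    (-((S - G * L)ᵀ * Xt + Xt * (S - G * L))).PosDef ∧
    Hurwitz (S - G * L) :=
  reduced_order_lyapunov_general A B S L P hrank hsylv X hX hlyap Xt hXt G hG
end
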